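/- Let A, B ∈ ℂ^{N×N} with generalized Schur form Q*BZ = [[α, b*],[0, B₁]] and Q*AZ = [[β, a*],[0, A₁]] where Q = [q₁ Q₂], Z = [z₁ Z₂] are unitary, z₁ = v/‖v‖₂ for an eigenvector v of the pencil A − λB with eigenvalue λ₀ = β/α. If λ̃₀ is not an eigenvalue of A − λB (so A₁ − λ̃₀B₁ is invertible), then for any nonzero ṽ ∈ ℂ^N, sin∠(v, ṽ) ≤ ‖(A − λ̃₀B)ṽ‖₂ / (‖ṽ‖₂ · σ_min(A₁ − λ̃₀B₁)). -/

import Mathlib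

/-!
Write `ṽ = Z c`. Since the first column of `Z` is `v/‖v‖` and `Z` is unitary, `sin∠(v, ṽ)` is
`‖c_tail‖ / ‖c‖`, where `c_tail = (c₁, …, c_N)`. The matrix `S = Q*(A - λ̃₀B)Z` has first column
`(s₀₀, 0, …, 0)` and trailing block `S₁ = A₁ - λ̃₀B₁`, so the tail of `Sc` is `S₁ c_tail`; hence
`‖c_tail‖ ≤ ‖S₁⁻¹‖ ‖S₁ c_tail‖ ≤ ‖S₁⁻¹‖ ‖Sc‖ = ‖(A - λ̃₀B)ṽ‖ / σ_min(S₁)`, and `‖c‖ = ‖ṽ‖`.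
-/

open scoped BigOperators
open Matrix

/-- Euclidean norm of a finite complex vector. -/
noncomputable def vecNorm2 {ι : Type*} [Fintype ι] (v : ι → ℂ) : ℝ :=
  Real.sqrt (∑ i, ‖v i‖ ^ 2)

/-- Standard Hermitian inner product `w* u` (conjugate-linear in `w`). -/
noncomputable def cinner {ι : Type*} [Fintype ι] (w v : ι → ℂ) : ℂ :=
  ∑ i, (starRingEnd ℂ) (w i) * v i

/-- Sine of the acute angle between two vectors. -/
noncomputable def sinAngle {ι : Type*} [Fintype ι] (u w : ι → ℂ) : ℝ :=
  Real.sqrt (1 - ‖cinner w u‖ ^ 2 / (vecNorm2 u ^ 2 * vecNorm2 w ^ 2))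

/-- Spectral (operator 2-) norm of a square complex matrix. -/
noncomputable def opNorm {k : Type*} [Fintype k] [DecidableEq k]
    (M : Matrix k k ℂ) : ℝ :=
  ‖Matrix.toEuclideanCLM (𝕜 := ℂ) M‖

/-- Smallest singular value of an invertible matrix: `σ_min(M) = ‖M⁻¹‖₂⁻¹`.
This equals `sep(λ,(A₁,B₁))` when `M = A₁ - λ B₁`. -/
noncomputable def sigmaMin {k : Type*} [Fintype k] [DecidableEq k]
    (M : Matrix k k ℂ) : ℝ :=
  (opNorm M⁻¹)⁻¹

section VecNorm

variable {ι : Type*} [Fintype ι]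

lemma vecNorm2_eq_norm_toLp (v : ι → ℂ) : vecNorm2 v = ‖WithLp.toLp 2 v‖ := by
  simp [vecNorm2, EuclideanSpace.norm_eq]

lemma vecNorm2_nonneg (v : ι → ℂ) : 0 ≤ vecNorm2 v :=
  Real.sqrt_nonneg _

lemma vecNorm2_pos {v : ι → ℂ} (hv : v ≠ 0) : 0 < vecNorm2 v := by
  rw [vecNorm2_eq_norm_toLp, norm_pos_iff]
  exact fun h => hv (WithLp.toLp_injective 2 (by simpa using h))

lemma vecNorm2_sq (v : ι → ℂ) : vecNorm2 v ^ 2 = ∑ i, ‖v i‖ ^ 2 :=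
  Real.sq_sqrt (Finset.sum_nonneg fun _ _ => sq_nonneg _)

lemma vecNorm2_smul (r : ℂ) (v : ι → ℂ) : vecNorm2 (r • v) = ‖r‖ * vecNorm2 v := by
  rw [vecNorm2_eq_norm_toLp, vecNorm2_eq_norm_toLp, WithLp.toLp_smul, norm_smul]

lemma vecNorm2_eq_sqrt_cinner_self (v : ι → ℂ) : vecNorm2 v = Real.sqrt (cinner v v).re := by
  simp [vecNorm2, cinner, Complex.re_sum, Complex.conj_mul', ← Complex.ofReal_pow]

lemma cinner_eq_star_dotProduct (w v : ι → ℂ) : cinner w v = star w ⬝ᵥ v := by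
  simp [cinner, dotProduct, Pi.star_apply, RCLike.star_def]

lemma cinner_smul_right (r : ℂ) (w v : ι → ℂ) : cinner w (r • v) = r * cinner w v := by
  simp only [cinner, Pi.smul_apply, smul_eq_mul, Finset.mul_sum]
  exact Finset.sum_congr rfl fun _ _ => by ring

lemma sq_vecNorm2_fin_succ {n : ℕ} (c : Fin (n + 1) → ℂ) :
    vecNorm2 c ^ 2 = ‖c 0‖ ^ 2 + vecNorm2 (Fin.tail c) ^ 2 := by
  rw [vecNorm2_sq, vecNorm2_sq, Fin.sum_univ_succ]
  rfl

lemma vecNorm2_tail_le {n : ℕ} (c : Fin (n + 1) → ℂ) : vecNorm2 (Fin.tail c) ≤ vecNorm2 c :=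
  le_of_pow_le_pow_left₀ two_ne_zero (vecNorm2_nonneg c)
    (by rw [sq_vecNorm2_fin_succ c]; nlinarith [sq_nonneg ‖c 0‖])

end VecNorm

section Unitary

variable {k : Type*} [Fintype k] [DecidableEq k]

lemma cinner_mulVec_unitary {U : Matrix k k ℂ} (hU : U ∈ unitaryGroup k ℂ) (w v : k → ℂ) :
    cinner (U *ᵥ w) (U *ᵥ v) = cinner w v := by
  have hUU : star U * U = 1 := mem_unitaryGroup_iff'.mp hU
  rw [cinner_eq_star_dotProduct, cinner_eq_star_dotProduct, star_mulVec, dotProduct_mulVec,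
    vecMul_vecMul, ← star_eq_conjTranspose, hUU, vecMul_one]

lemma vecNorm2_mulVec_unitary {U : Matrix k k ℂ} (hU : U ∈ unitaryGroup k ℂ) (v : k → ℂ) :
    vecNorm2 (U *ᵥ v) = vecNorm2 v := by
  rw [vecNorm2_eq_sqrt_cinner_self, vecNorm2_eq_sqrt_cinner_self, cinner_mulVec_unitary hU]

lemma sinAngle_mulVec_unitary {U : Matrix k k ℂ} (hU : U ∈ unitaryGroup k ℂ) (v w : k → ℂ) :
    sinAngle (U *ᵥ v) (U *ᵥ w) = sinAngle v w := by
  simp only [sinAngle, cinner_mulVec_unitary hU, vecNorm2_mulVec_unitary hU]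

lemma mulVec_mulVec_unitary_eq {Q Z : Matrix k k ℂ} (hQ : Q ∈ unitaryGroup k ℂ)
    (M : Matrix k k ℂ) (c : k → ℂ) : M *ᵥ (Z *ᵥ c) = Q *ᵥ ((Qᴴ * M * Z) *ᵥ c) := by
  rw [mulVec_mulVec, mulVec_mulVec, ← Matrix.mul_assoc, ← Matrix.mul_assoc,
    ← star_eq_conjTranspose, mem_unitaryGroup_iff.mp hQ, Matrix.one_mul]

lemma vecNorm2_mulVec_le_opNorm (M : Matrix k k ℂ) (x : k → ℂ) :
    vecNorm2 (M *ᵥ x) ≤ opNorm M * vecNorm2 x := by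
  rw [vecNorm2_eq_norm_toLp, vecNorm2_eq_norm_toLp, ← toEuclideanCLM_toLp]
  exact (toEuclideanCLM (𝕜 := ℂ) M).le_opNorm _

lemma sigmaMin_nonneg (M : Matrix k k ℂ) : 0 ≤ sigmaMin M :=
  inv_nonneg.mpr (norm_nonneg _)

lemma vecNorm2_le_div_sigmaMin {M : Matrix k k ℂ} (hM : IsUnit M) (x : k → ℂ) :
    vecNorm2 x ≤ vecNorm2 (M *ᵥ x) / sigmaMin M := by
  have hx : x = M⁻¹ *ᵥ (M *ᵥ x) := by
    rw [mulVec_mulVec, nonsing_inv_mul M ((isUnit_iff_isUnit_det M).mp hM), one_mulVec]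
  rw [sigmaMin, div_inv_eq_mul, mul_comm]
  conv_lhs => rw [hx]
  exact vecNorm2_mulVec_le_opNorm _ _

end Unitary

lemma sinAngle_smul_left {ι : Type*} [Fintype ι] {r : ℂ} (hr : r ≠ 0) (v w : ι → ℂ) :
    sinAngle (r • v) w = sinAngle v w := by
  have hr2 : ‖r‖ ^ 2 ≠ 0 := pow_ne_zero 2 (norm_ne_zero_iff.mpr hr)
  simp only [sinAngle, cinner_smul_right, vecNorm2_smul, norm_mul, mul_pow, mul_assoc]
  rw [mul_div_mul_left _ _ hr2]

lemma sinAngle_single_zero {n : ℕ} {c : Fin (n + 1) → ℂ} (hc : c ≠ 0) :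
    sinAngle (Pi.single 0 1) c = vecNorm2 (Fin.tail c) / vecNorm2 c := by
  have hc0 : vecNorm2 c ≠ 0 := (vecNorm2_pos hc).ne'
  have hinner : cinner c (Pi.single 0 1) = starRingEnd ℂ (c 0) := by
    simp [cinner, Pi.single_apply]
  have hsingle : vecNorm2 (Pi.single 0 1 : Fin (n + 1) → ℂ) = 1 := by
    simp [vecNorm2, Pi.single_apply, apply_ite]
  have hsq : 1 - ‖c 0‖ ^ 2 / vecNorm2 c ^ 2 = (vecNorm2 (Fin.tail c) / vecNorm2 c) ^ 2 := by
    field_simp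
    linarith [sq_vecNorm2_fin_succ c]
  rw [sinAngle, hinner, hsingle, Complex.norm_conj, one_pow, one_mul, hsq,
    Real.sqrt_sq (div_nonneg (vecNorm2_nonneg _) (vecNorm2_nonneg _))]

lemma sinAngle_mulVec_of_col_zero {n : ℕ} {Z : Matrix (Fin (n + 1)) (Fin (n + 1)) ℂ}
    (hZ : Z ∈ unitaryGroup (Fin (n + 1)) ℂ) {v : Fin (n + 1) → ℂ} (hv : v ≠ 0)
    (hz : ∀ p, Z p 0 = v p / (vecNorm2 v : ℂ)) {c : Fin (n + 1) → ℂ} (hc : c ≠ 0) :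
    sinAngle v (Z *ᵥ c) = vecNorm2 (Fin.tail c) / vecNorm2 c := by
  have hv0 : (vecNorm2 v : ℂ) ≠ 0 := by exact_mod_cast (vecNorm2_pos hv).ne'
  have hv_eq : v = (vecNorm2 v : ℂ) • (Z *ᵥ Pi.single 0 1) := by
    funext p
    simp [hz, mul_div_cancel₀ _ hv0]
  rw [hv_eq, sinAngle_smul_left hv0, sinAngle_mulVec_unitary hZ, sinAngle_single_zero hc]

lemma tail_mulVec_of_col_zero {R : Type*} [CommSemiring R] {n : ℕ}
    {S : Matrix (Fin (n + 1)) (Fin (n + 1)) R} (hS : ∀ i : Fin n, S i.succ 0 = 0)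
    (c : Fin (n + 1) → R) :
    Fin.tail (S *ᵥ c) = S.submatrix Fin.succ Fin.succ *ᵥ Fin.tail c := by
  funext i
  simp [Fin.tail, mulVec, dotProduct, Fin.sum_univ_succ, hS]

theorem stmt8_general {N : ℕ} (A B : Matrix (Fin (N + 1)) (Fin (N + 1)) ℂ)
    (Q Z : Matrix (Fin (N + 1)) (Fin (N + 1)) ℂ)
    (hQ : Q ∈ Matrix.unitaryGroup (Fin (N + 1)) ℂ)
    (hZ : Z ∈ Matrix.unitaryGroup (Fin (N + 1)) ℂ)
    (v : Fin (N + 1) → ℂ) (hv : v ≠ 0) (lamt : ℂ)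
    (hz1 : ∀ p, Z p 0 = v p / (vecNorm2 v : ℂ))
    (hA0 : ∀ i : Fin N, (Qᴴ * A * Z) i.succ 0 = 0)
    (hB0 : ∀ i : Fin N, (Qᴴ * B * Z) i.succ 0 = 0)
    (hinv : IsUnit (Matrix.of fun i j : Fin N =>
      (Qᴴ * A * Z) i.succ j.succ - lamt * (Qᴴ * B * Z) i.succ j.succ))
    (vt : Fin (N + 1) → ℂ) (hvt : vt ≠ 0) :
    sinAngle v vt ≤
      vecNorm2 ((A - lamt • B).mulVec vt) /
        (vecNorm2 vt * sigmaMin (Matrix.of fun i j : Fin N =>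
          (Qᴴ * A * Z) i.succ j.succ - lamt * (Qᴴ * B * Z) i.succ j.succ)) := by
  set S := Qᴴ * (A - lamt • B) * Z
  have hS : S = Qᴴ * A * Z - lamt • (Qᴴ * B * Z) := by
    simp only [S, Matrix.mul_sub, Matrix.sub_mul, Matrix.mul_smul, Matrix.smul_mul]
  have hScol : ∀ i : Fin N, S i.succ 0 = 0 := fun i => by simp [hS, hA0, hB0]
  have hS₁ : (Matrix.of fun i j : Fin N =>
      (Qᴴ * A * Z) i.succ j.succ - lamt * (Qᴴ * B * Z) i.succ j.succ) =
      S.submatrix Fin.succ Fin.succ := by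
    ext i j; simp [hS]
  rw [hS₁] at hinv ⊢
  set c := Zᴴ *ᵥ vt
  have hvt_eq : vt = Z *ᵥ c := by
    rw [mulVec_mulVec, ← star_eq_conjTranspose, mem_unitaryGroup_iff.mp hZ, one_mulVec]
  have hc : c ≠ 0 := fun h => hvt (by rw [hvt_eq, h, mulVec_zero])
  have htail : vecNorm2 (Fin.tail c) ≤
      vecNorm2 (S *ᵥ c) / sigmaMin (S.submatrix Fin.succ Fin.succ) := by
    refine (vecNorm2_le_div_sigmaMin hinv _).trans ?_
    rw [← tail_mulVec_of_col_zero hScol]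
    exact div_le_div_of_nonneg_right (vecNorm2_tail_le _) (sigmaMin_nonneg _)
  rw [hvt_eq, sinAngle_mulVec_of_col_zero hZ hv hz1 hc, mulVec_mulVec_unitary_eq hQ,
    vecNorm2_mulVec_unitary hQ, vecNorm2_mulVec_unitary hZ, mul_comm, ← div_div]
  exact div_le_div_of_nonneg_right htail (vecNorm2_nonneg c)

/-- Eigenvector error bound for the generalized eigenvalue problem: with a
generalized Schur form of the pencil `A - λB` deflating the eigenpair
`(λ₀, v)` (first column of `Z` equal to `v/‖v‖`), and `λ̃₀` not an eigenvalue,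
`sin∠(v,ṽ) ≤ ‖(A - λ̃₀B)ṽ‖ / (‖ṽ‖ σ_min(A₁ - λ̃₀B₁))`. -/
theorem stmt8 {N : ℕ} (A B : Matrix (Fin (N + 1)) (Fin (N + 1)) ℂ)
    (Q Z : Matrix (Fin (N + 1)) (Fin (N + 1)) ℂ)
    (hQ : Q ∈ Matrix.unitaryGroup (Fin (N + 1)) ℂ)
    (hZ : Z ∈ Matrix.unitaryGroup (Fin (N + 1)) ℂ)
    (v : Fin (N + 1) → ℂ) (hv : v ≠ 0) (lam0 lamt : ℂ)
    (hz1 : ∀ p, Z p 0 = v p / (vecNorm2 v : ℂ))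
    (hA0 : ∀ i : Fin N, (Qᴴ * A * Z) i.succ 0 = 0)
    (hB0 : ∀ i : Fin N, (Qᴴ * B * Z) i.succ 0 = 0)
    (hA1tri : ∀ i j : Fin N, j < i → (Qᴴ * A * Z) i.succ j.succ = 0)
    (hB1tri : ∀ i j : Fin N, j < i → (Qᴴ * B * Z) i.succ j.succ = 0)
    (hlam0 : lam0 = (Qᴴ * A * Z) 0 0 / (Qᴴ * B * Z) 0 0)
    (heig : A.mulVec v = lam0 • B.mulVec v)
    (hnoteig : (A - lamt • B).det ≠ 0)
    (hinv : IsUnit (Matrix.of fun i j : Fin N =>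
      (Qᴴ * A * Z) i.succ j.succ - lamt * (Qᴴ * B * Z) i.succ j.succ))
    (vt : Fin (N + 1) → ℂ) (hvt : vt ≠ 0) :
    sinAngle v vt ≤
      vecNorm2 ((A - lamt • B).mulVec vt) /
        (vecNorm2 vt * sigmaMin (Matrix.of fun i j : Fin N =>
          (Qᴴ * A * Z) i.succ j.succ - lamt * (Qᴴ * B * Z) i.succ j.succ)) :=
  stmt8_general A B Q Z hQ hZ v hv lamt hz1 hA0 hB0 hinv vt hvt
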